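/- For n ≥ 3, the eigenvalue n−1 of the adjacency matrix of the burnt pancake graph BP_n has multiplicity at least 2. -/

import Mathlib

/-- The set `±[n] = {-n, …, -1, 1, …, n}` as a subtype of `ℤ`. -/
def PM (n : ℕ) : Type := {x : ℤ // x ≠ 0 ∧ x.natAbs ≤ n}

instance (n : ℕ) : DecidableEq (PM n) := fun _ _ =>
  decidable_of_iff _ Subtype.ext_iff.symm

instance (n : ℕ) : Finite (PM n) :=
  Set.Finite.to_subtype (s := {x : ℤ | x ≠ 0 ∧ x.natAbs ≤ n})
    (Set.Finite.subset (Set.finite_Icc (-(n : ℤ)) n)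
      (fun x hx => by simp only [Set.mem_setOf_eq] at hx; simp only [Set.mem_Icc]; omega))

noncomputable instance (n : ℕ) : Fintype (PM n) := Fintype.ofFinite _

/-- Negation on `±[n]`. -/
def negPM (n : ℕ) (x : PM n) : PM n :=
  ⟨-x.1, by have hx := x.2; constructor <;> omega⟩

/-- The `i`-th signed prefix reversal `r_i = (1,-i)(2,-(i-1))⋯(i,-1)` as a
function on `ℤ`: it sends `x` with `1 ≤ x ≤ i` to `-(i+1-x)`, sends `x` with
`-i ≤ x ≤ -1` to `i+1+x`, and fixes every other `x`. -/
def rfun (i x : ℤ) : ℤ :=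
  if 1 ≤ x ∧ x ≤ i then x - i - 1 else if -i ≤ x ∧ x ≤ -1 then x + i + 1 else x

lemma rfun_invol (i : ℤ) : Function.Involutive (rfun i) := by
  intro x; unfold rfun; split_ifs <;> omega

/-- The signed prefix reversal `r_{i+1}` (for `i : Fin n`, so that the
one-based index `i+1` ranges over `1, …, n`) as a map `±[n] → ±[n]`. -/
def rMap (n : ℕ) (i : Fin n) (x : PM n) : PM n :=
  ⟨rfun ((i : ℕ) + 1) x.1, by
    have hx := x.2; have hi := i.2; unfold rfun; split_ifs <;> constructor <;> omega⟩

/-- The signed prefix reversal `r_{i+1}` as a permutation of `±[n]`. -/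
def rPerm (n : ℕ) (i : Fin n) : Equiv.Perm (PM n) :=
  Function.Involutive.toPerm (rMap n i)
    (by intro x; apply Subtype.ext; exact rfun_invol _ x.1)

/-- The hyperoctahedral group `B_n`, realized as the subgroup of permutations
`σ` of `±[n]` satisfying `σ(-x) = -σ(x)`. -/
def Bgroup (n : ℕ) : Subgroup (Equiv.Perm (PM n)) where
  carrier := {σ | ∀ x, σ (negPM n x) = negPM n (σ x)}
  one_mem' := fun _ => rfl
  mul_mem' := by
    intro a b ha hb x
    simp only [Equiv.Perm.mul_apply, hb x, ha (b x)]
  inv_mem' := by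
    intro a ha x
    have h := ha (a⁻¹ x)
    rw [show a (a⁻¹ x) = x from a.apply_symm_apply x] at h
    rw [← h, show a⁻¹ (a (negPM n (a⁻¹ x))) = negPM n (a⁻¹ x) from a.symm_apply_apply _]

lemma rPerm_mem (n : ℕ) (i : Fin n) : rPerm n i ∈ Bgroup n := by
  intro x
  apply Subtype.ext
  show rfun ((i : ℕ) + 1) (-x.1) = -(rfun ((i : ℕ) + 1) x.1)
  have hx := x.2
  unfold rfun
  split_ifs <;> omega

/-- The signed prefix reversal `r_{i+1}` as an element of `B_n`. -/
def rElem (n : ℕ) (i : Fin n) : ↥(Bgroup n) := ⟨rPerm n i, rPerm_mem n i⟩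

lemma rElem_mul_self (n : ℕ) (i : Fin n) : rElem n i * rElem n i = 1 := by
  apply Subtype.ext
  apply Equiv.ext
  intro x
  apply Subtype.ext
  exact rfun_invol _ x.1

/-- The burnt pancake graph `BP_n`: the Cayley graph of `B_n` with respect to
the signed prefix reversals `r_1, …, r_n`. -/
def BP (n : ℕ) : SimpleGraph ↥(Bgroup n) where
  Adj σ τ := σ ≠ τ ∧ ∃ i : Fin n, τ = σ * rElem n i
  symm := ⟨by
    rintro σ τ ⟨hne, i, rfl⟩
    exact ⟨hne.symm, i, by rw [mul_assoc, rElem_mul_self, mul_one]⟩⟩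
  loopless := ⟨fun σ h => h.1 rfl⟩

instance (n : ℕ) : Finite ↥(Bgroup n) := Subtype.finite

noncomputable instance (n : ℕ) : Fintype ↥(Bgroup n) := Fintype.ofFinite _

noncomputable instance (n : ℕ) (v : ↥(Bgroup n)) : Fintype ((BP n).neighborSet v) :=
  Fintype.ofFinite _

/-!
In `σ ∈ B_n` the pancake `k` sits at the signed position `σ⁻¹ k`, and in `σ * r_i` at
`r_i (σ⁻¹ k)`. Hence every `g : ±[n] → ℝ` with `∑ᵢ g (r_i x) = μ g x` lifts to the
`μ`-eigenfunction `σ ↦ g (σ⁻¹ k)` of `BP_n`. The profile `g x = (n-1)[|x| = n] + [|x| = 1] - 1`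
has `μ = n - 1`: exactly one reversal brings the pancake at depth `|x|` to the top, and the
bottom pancake is moved only by `r_n`, which brings the top one to the bottom. The lifts for
`k = n` and `k = 1` are independent, as their values `(n-2, 0)` at `1` and `(0, n-2)` at `r_n`
show.
-/

open Finset
open scoped Matrix

theorem SimpleGraph.adjMatrix_mulVec_apply_eq_sum {V ι α : Type*} [Fintype V] [Fintype ι]
    [NonAssocSemiring α] (G : SimpleGraph V) [DecidableRel G.Adj] {v : V} {φ : ι → V}
    (hφ : Function.Injective φ) (hadj : ∀ w, G.Adj v w ↔ w ∈ Set.range φ) (f : V → α) :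
    (G.adjMatrix α *ᵥ f) v = ∑ i, f (φ i) := by
  refine (Fintype.sum_of_injective φ hφ _ _ (fun w hw => ?_) (fun i => ?_)).symm
  · simp [SimpleGraph.adjMatrix_apply, hadj, hw]
  · simp [SimpleGraph.adjMatrix_apply, hadj]

theorem linearIndependent_pair_of_apply {X K : Type*} [Field K] {f g : X → K} {a b : X}
    (hfa : f a ≠ 0) (hga : g a = 0) (hfb : f b = 0) (hgb : g b ≠ 0) :
    LinearIndependent K ![f, g] := by
  refine LinearIndependent.pair_iff.mpr fun s t hst => ⟨?_, ?_⟩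
  · simpa [hfa, hga] using congrFun hst a
  · simpa [hgb, hfb] using congrFun hst b

theorem Submodule.two_le_finrank_of_pair_mem {K V : Type*} [Field K] [AddCommGroup V]
    [Module K V] {E : Submodule K V} [FiniteDimensional K E] {x y : V}
    (hxy : LinearIndependent K ![x, y]) (hx : x ∈ E) (hy : y ∈ E) :
    2 ≤ Module.finrank K E := by
  have hspan : Submodule.span K (Set.range ![x, y]) ≤ E := by
    rw [Submodule.span_le, Matrix.range_cons, Matrix.range_cons, Matrix.range_empty]
    simp [Set.insert_subset_iff, hx, hy]
  calc 2 = Module.finrank K (Submodule.span K (Set.range ![x, y])) := by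
        rw [finrank_span_eq_card hxy, Fintype.card_fin]
    _ ≤ Module.finrank K E := Submodule.finrank_mono hspan

theorem rElem_apply_val (n : ℕ) (i : Fin n) (x : PM n) :
    ((rElem n i : Equiv.Perm (PM n)) x).1 = rfun ((i : ℕ) + 1) x.1 := rfl

theorem PM.exists_val_eq_one {n : ℕ} (hn : 0 < n) : ∃ x : PM n, x.1 = 1 :=
  ⟨⟨1, by omega⟩, rfl⟩

theorem rElem_apply_val_of_val_eq_one (n : ℕ) (i : Fin n) {x : PM n} (hx : x.1 = 1) :
    ((rElem n i : Equiv.Perm (PM n)) x).1 = -((i : ℤ) + 1) := by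
  rw [rElem_apply_val, hx, rfun]
  split_ifs <;> omega

theorem rElem_inv (n : ℕ) (i : Fin n) : (rElem n i)⁻¹ = rElem n i :=
  inv_eq_of_mul_eq_one_left (rElem_mul_self n i)

theorem rElem_injective (n : ℕ) : Function.Injective (rElem n) := by
  intro i j h
  obtain ⟨x, hx⟩ := PM.exists_val_eq_one i.pos
  have hval := congrArg (fun σ : Bgroup n => ((σ : Equiv.Perm (PM n)) x).1) h
  simp only [rElem_apply_val_of_val_eq_one n _ hx] at hval
  exact Fin.ext (by omega)

theorem rElem_ne_one (n : ℕ) (i : Fin n) : rElem n i ≠ 1 := by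
  intro h
  obtain ⟨x, hx⟩ := PM.exists_val_eq_one i.pos
  have hval := congrArg (fun σ : Bgroup n => ((σ : Equiv.Perm (PM n)) x).1) h
  simp only [rElem_apply_val_of_val_eq_one n _ hx] at hval
  change -((i : ℤ) + 1) = x.1 at hval
  omega

theorem BP_adj_iff (n : ℕ) (σ τ : Bgroup n) :
    (BP n).Adj σ τ ↔ τ ∈ Set.range (fun i => σ * rElem n i) := by
  refine ⟨fun ⟨_, i, h⟩ => ⟨i, h.symm⟩, fun ⟨i, h⟩ => ⟨?_, i, h.symm⟩⟩
  rw [← h, ne_eq, left_eq_mul]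
  exact rElem_ne_one n i

open scoped Classical in
theorem BP_adjMatrix_mulVec_apply (n : ℕ) (f : Bgroup n → ℝ) (σ : Bgroup n) :
    ((BP n).adjMatrix ℝ *ᵥ f) σ = ∑ i, f (σ * rElem n i) :=
  SimpleGraph.adjMatrix_mulVec_apply_eq_sum _ ((mul_right_injective σ).comp (rElem_injective n))
    (BP_adj_iff n σ) f

open scoped Classical in
theorem BP_lift_mem_eigenspace (n : ℕ) {g : PM n → ℝ} {μ : ℝ}
    (hg : ∀ p, ∑ i, g ((rElem n i : Equiv.Perm (PM n)) p) = μ * g p) (k : PM n) :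
    (fun σ : Bgroup n => g ((σ : Equiv.Perm (PM n))⁻¹ k)) ∈
      Module.End.eigenspace (Matrix.toLin' ((BP n).adjMatrix ℝ)) μ := by
  rw [Module.End.mem_eigenspace_iff, Matrix.toLin'_apply]
  funext σ
  rw [BP_adjMatrix_mulVec_apply, Pi.smul_apply, smul_eq_mul, ← hg]
  refine sum_congr rfl fun i _ => congrArg g ?_
  rw [Subgroup.coe_mul, mul_inv_rev, Equiv.Perm.mul_apply, ← Subgroup.coe_inv, rElem_inv]

theorem rfun_self (i : ℤ) (hi : 1 ≤ i) : rfun i i = -1 := by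
  rw [rfun, if_pos ⟨hi, le_rfl⟩]
  ring

theorem rfun_one (i : ℤ) (hi : 1 ≤ i) : rfun i 1 = -i := by
  rw [rfun, if_pos ⟨le_rfl, hi⟩]
  ring

theorem card_filter_natAbs_rfun_eq_one (n : ℕ) {p : ℤ} (hp : p ≠ 0) (hpn : p.natAbs ≤ n) :
    #{i ∈ range n | (rfun ((i : ℕ) + 1) p).natAbs = 1} = 1 := by
  rw [card_eq_one]
  refine ⟨p.natAbs - 1, ext fun i => ?_⟩
  rw [mem_filter]
  simp only [mem_range, mem_singleton, rfun]
  split_ifs <;> omega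

theorem card_filter_natAbs_rfun_eq_self (n : ℕ) {p : ℤ} (hpn : p.natAbs ≤ n) :
    #{i ∈ range n | (rfun ((i : ℕ) + 1) p).natAbs = n} =
      (if p.natAbs = n then n - 1 else 0) + (if p.natAbs = 1 then 1 else 0) := by
  have hfilter : {i ∈ range n | (rfun ((i : ℕ) + 1) p).natAbs = n} =
      (if p.natAbs = n then range (n - 1) else ∅) ∪
        (if p.natAbs = 1 then {n - 1} else ∅) := by
    ext i
    rw [mem_filter, mem_union]
    simp only [mem_range, rfun]
    split_ifs <;>
      simp only [mem_range, mem_singleton, notMem_empty, or_false, false_or, iff_false] <;> omega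
  rw [hfilter, card_union_of_disjoint]
  · split_ifs <;> simp
  · split_ifs <;> simp

noncomputable def pancakeProfile (n : ℕ) (x : ℤ) : ℝ :=
  (n - 1) * (if x.natAbs = n then 1 else 0) + (if x.natAbs = 1 then 1 else 0) - 1

theorem pancakeProfile_of_natAbs_eq_self {n : ℕ} {x : ℤ} (hn : n ≠ 1) (hx : x.natAbs = n) :
    pancakeProfile n x = n - 2 := by
  rw [pancakeProfile, if_pos hx, if_neg (hx ▸ hn)]
  ring

theorem pancakeProfile_of_natAbs_eq_one {n : ℕ} {x : ℤ} (hn : n ≠ 1) (hx : x.natAbs = 1) :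
    pancakeProfile n x = 0 := by
  rw [pancakeProfile, if_neg (hx ▸ Ne.symm hn), if_pos hx]
  ring

theorem sum_pancakeProfile_rfun (n : ℕ) {p : ℤ} (hp : p ≠ 0) (hpn : p.natAbs ≤ n) :
    ∑ i ∈ range n, pancakeProfile n (rfun ((i : ℕ) + 1) p) = (n - 1) * pancakeProfile n p := by
  have hn : 1 ≤ n := by omega
  simp only [pancakeProfile, sum_sub_distrib, sum_add_distrib, ← mul_sum, sum_boole,
    card_filter_natAbs_rfun_eq_one n hp hpn, card_filter_natAbs_rfun_eq_self n hpn, sum_const,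
    card_range, nsmul_eq_mul, mul_one]
  split_ifs <;> push_cast [Nat.cast_sub hn] <;> ring

theorem sum_pancakeProfile_rElem (n : ℕ) (p : PM n) :
    ∑ i, pancakeProfile n ((rElem n i : Equiv.Perm (PM n)) p).1 =
      (n - 1) * pancakeProfile n p.1 := by
  simp only [rElem_apply_val]
  rw [Fin.sum_univ_eq_sum_range (fun i => pancakeProfile n (rfun ((i : ℕ) + 1) p.1))]
  exact sum_pancakeProfile_rfun n p.2.1 p.2.2

open scoped Classical in
/-- For `n ≥ 3`, the eigenvalue `n - 1` of the adjacency
matrix of the burnt pancake graph `BP_n` has multiplicity at least `2`. -/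
theorem BP_eigenvalue_multiplicity (n : ℕ) (hn : 3 ≤ n) :
    2 ≤ Module.finrank ℝ
        (Module.End.eigenspace (Matrix.toLin' ((BP n).adjMatrix ℝ)) ((n : ℝ) - 1)) := by
  let k₁ : PM n := ⟨1, by omega⟩
  let kₙ : PM n := ⟨n, by omega⟩
  let r := rElem n ⟨n - 1, by omega⟩
  have hr (p : PM n) : ((r : Equiv.Perm (PM n))⁻¹ p).1 = rfun n p.1 := by
    rw [← Subgroup.coe_inv, rElem_inv, rElem_apply_val, Fin.val_mk, Nat.cast_pred (by omega),
      sub_add_cancel]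
  have hn1 : n ≠ 1 := by omega
  have hn2 : (n : ℝ) - 2 ≠ 0 := by
    have : (3 : ℝ) ≤ n := by exact_mod_cast hn
    linarith
  have hmem := BP_lift_mem_eigenspace n (g := fun p => pancakeProfile n p.1)
    (sum_pancakeProfile_rElem n)
  refine Submodule.two_le_finrank_of_pair_mem
    (linearIndependent_pair_of_apply (a := 1) (b := r) ?_ ?_ ?_ ?_) (hmem kₙ) (hmem k₁)
  · rwa [OneMemClass.coe_one, inv_one, Equiv.Perm.one_apply,
      pancakeProfile_of_natAbs_eq_self hn1 (Int.natAbs_natCast n)]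
  · rw [OneMemClass.coe_one, inv_one, Equiv.Perm.one_apply,
      pancakeProfile_of_natAbs_eq_one hn1 rfl]
  · rw [hr, rfun_self _ (by omega), pancakeProfile_of_natAbs_eq_one hn1 rfl]
  · rwa [hr, rfun_one _ (by omega), pancakeProfile_of_natAbs_eq_self hn1 (by simp)]
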